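/- arXiv:1207.6481 — 3 statements merged into one kernel-verified Lean document; each statement's English description precedes it below -/
import Mathlib

section
/- Define f_k ∈ ℚ[t,u] by the formal power series expansion log(1 + t·x + ((u+t²)/4)·x²) = ∑_{k≥1} f_k(t,u)·x^k. Then for every k ≥ 1, f_k = (1/(k·(-2)^{k-1})) · ∑_{q=0}^{⌊k/2⌋} (-1)^q · C(k, 2q) · t^{k-2q} · u^q. -/
/-!
Write `v = t x + s x²` and `L = log (1 + v)`. Differentiating the logarithmic series termwise gives
`(1 + v) L' = v'`, and `1 + v` is cancellable, so `L'` is the only power series solving this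
equation. Over `ℚ[t,u][ω]` with `ω² = -u` one has `1 + v = (1 + (t + ω) x / 2) (1 + (t - ω) x / 2)`,
which predicts `L' = ∑ₙ (-1/2)ⁿ Re (t + ω)ⁿ⁺¹ xⁿ`. This is confirmed with the recurrence
`Re (t + ω)ⁿ⁺² = 2t Re (t + ω)ⁿ⁺¹ - (t² + u) Re (t + ω)ⁿ`, and the binomial theorem expands
`Re (t + ω)ᵏ` into the stated sum.
-/

noncomputable section

/-- The polynomial ring ℚ[t,u]. -/
abbrev Rtu : Type := MvPolynomial (Fin 2) ℚ

def t : Rtu := MvPolynomial.X 0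
def u : Rtu := MvPolynomial.X 1

/-- `log(1+v) = ∑_{m≥1} (-1)^{m+1} v^m / m` for `v` with zero constant term. -/
def logOne (v : PowerSeries Rtu) : PowerSeries Rtu :=
  PowerSeries.mk fun k => ∑ m ∈ Finset.range (k + 1),
    MvPolynomial.C ((-1 : ℚ) ^ (m + 1) / (m : ℚ)) * PowerSeries.coeff (R := Rtu) k (v ^ m)

/-- `(u + t²)/4`, the polynomial `s` after the change of variables `u = 4s - t²`. -/
def sPoly : Rtu := MvPolynomial.C ((4 : ℚ)⁻¹) * (u + t ^ 2)

open Finset PowerSeries QuadraticAlgebra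

theorem Finset.sum_range_succ_eq_sum_range_two_mul {M : Type*} [AddCommMonoid M] (f : ℕ → M)
    (hf : ∀ q, f (2 * q + 1) = 0) (n : ℕ) :
    ∑ j ∈ range (n + 1), f j = ∑ q ∈ range (n / 2 + 1), f (2 * q) := by
  rw [← sum_image (g := (2 * ·)) fun _ _ _ _ h => by simpa using h]
  refine (sum_subset (fun j hj => ?_) fun j _ hj => ?_).symm
  · obtain ⟨q, hq, rfl⟩ := mem_image.1 hj
    simp only [mem_range] at hq ⊢
    omega
  · obtain ⟨q, rfl | rfl⟩ := Nat.even_or_odd' j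
    · exact absurd (mem_image_of_mem _ (by simp at *; omega)) hj
    · exact hf q

namespace QuadraticAlgebra

variable {R : Type*} [CommRing R] {a b : R}

theorem re_algebraMap_mul (r : R) (z : QuadraticAlgebra R a b) :
    (algebraMap R _ r * z).re = r * z.re := by
  rw [← Algebra.smul_def, re_smul, smul_eq_mul]

variable (a) (x : R)

theorem omega_sq : (ω : QuadraticAlgebra R a 0) ^ 2 = algebraMap R _ a := by
  simp [sq, omega_mul_omega_eq_algebraMap]

theorem re_omega_pow_two_mul (q : ℕ) : ((ω : QuadraticAlgebra R a 0) ^ (2 * q)).re = a ^ q := by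
  rw [pow_mul, omega_sq, ← map_pow, algebraMap_re]

theorem re_omega_pow_two_mul_add_one (q : ℕ) :
    ((ω : QuadraticAlgebra R a 0) ^ (2 * q + 1)).re = 0 := by
  rw [pow_succ, pow_mul, omega_sq, ← map_pow, re_algebraMap_mul, omega_re, mul_zero]

theorem re_algebraMap_add_omega_pow (n : ℕ) :
    ((algebraMap R _ x + ω : QuadraticAlgebra R a 0) ^ n).re =
      ∑ q ∈ range (n / 2 + 1), n.choose (2 * q) * x ^ (n - 2 * q) * a ^ q := by
  have hterm (j : ℕ) :
      (ω ^ j * algebraMap R (QuadraticAlgebra R a 0) x ^ (n - j) *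
        (n.choose j : QuadraticAlgebra R a 0)).re
      = n.choose j * x ^ (n - j) * (ω ^ j : QuadraticAlgebra R a 0).re := by
    rw [← re_algebraMap_mul]
    congr 1
    simp only [map_mul, map_pow, map_natCast]
    ring
  rw [add_comm, add_pow, ← reₗ_apply, map_sum]
  simp only [reₗ_apply, hterm]
  rw [sum_range_succ_eq_sum_range_two_mul _ (fun q => by simp [re_omega_pow_two_mul_add_one])]
  simp only [re_omega_pow_two_mul]

theorem re_algebraMap_add_omega_pow_add_two (n : ℕ) :
    ((algebraMap R _ x + ω : QuadraticAlgebra R a 0) ^ (n + 2)).re =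
      2 * x * ((algebraMap R _ x + ω : QuadraticAlgebra R a 0) ^ (n + 1)).re
        - (x ^ 2 - a) * ((algebraMap R _ x + ω : QuadraticAlgebra R a 0) ^ n).re := by
  have hsq : (algebraMap R _ x + ω : QuadraticAlgebra R a 0) ^ 2 =
      algebraMap R _ (2 * x) * (algebraMap R _ x + ω) - algebraMap R _ (x ^ 2 - a) := by
    simp only [map_mul, map_sub, map_pow, map_ofNat]
    linear_combination omega_sq a
  rw [pow_add, hsq, mul_sub, mul_left_comm, ← pow_succ, mul_comm _ (algebraMap R _ (x ^ 2 - a)),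
    re_sub, re_algebraMap_mul, re_algebraMap_mul]

end QuadraticAlgebra

namespace PowerSeries

section Quadratic

variable {R : Type*} [CommRing R] (a b : R)

theorem derivative_C_mul_X_add_C_mul_X_sq :
    d⁄dX R (C a * X + C b * X ^ 2) = C a + C (2 * b) * X := by
  simp [two_mul]
  ring

theorem one_add_C_mul_X_add_C_mul_X_sq_mul_eq {c d : R} {f : R⟦X⟧} (h₀ : coeff 0 f = c)
    (h₁ : coeff 1 f + a * coeff 0 f = d)
    (h : ∀ n, coeff (n + 2) f + a * coeff (n + 1) f + b * coeff n f = 0) :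
    (1 + C a * X + C b * X ^ 2) * f = C c + C d * X := by
  subst h₀ h₁
  refine PowerSeries.ext fun n => ?_
  rcases n with _ | _ | n <;>
    simp [add_mul, mul_assoc, coeff_succ_X_mul, coeff_X_pow_mul', coeff_C, h]

end Quadratic

theorem coeff_pow_eq_zero_of_lt {R : Type*} [CommSemiring R] {v : R⟦X⟧}
    (hv : constantCoeff v = 0) {n m : ℕ} (h : n < m) : coeff n (v ^ m) = 0 :=
  X_pow_dvd_iff.1 (pow_dvd_pow_of_dvd (X_dvd_iff.2 hv) m) n h

end PowerSeries

section LogPartialSum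

variable {R : Type*} [CommRing R] [Algebra ℚ R]

/-- The `m = 0` term vanishes because `1 / 0 = 0` in `ℚ`. -/
def logPartialSum (N : ℕ) (v : R⟦X⟧) : R⟦X⟧ :=
  ∑ m ∈ range (N + 1), ((-1 : ℚ) ^ (m + 1) / m) • v ^ m

theorem derivative_logPartialSum (N : ℕ) (v : R⟦X⟧) :
    d⁄dX R (logPartialSum N v) = (∑ m ∈ range N, (-v) ^ m) * d⁄dX R v := by
  rw [logPartialSum, map_sum, sum_range_succ', sum_mul]
  simp only [pow_zero, Nat.cast_zero, div_zero, zero_smul, map_zero, add_zero]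
  refine sum_congr rfl fun m _ => ?_
  rw [map_rat_smul, derivative_pow, Nat.add_sub_cancel]
  have hq : (-1 : ℚ) ^ (m + 1 + 1) / (m + 1 : ℕ) * (m + 1 : ℕ) = (-1) ^ m := by
    field_simp
    ring
  rw [Algebra.smul_def, ← map_natCast (algebraMap ℚ R⟦X⟧), ← mul_assoc, ← mul_assoc, ← map_mul,
    hq, map_pow, map_neg, map_one, neg_pow v]

theorem one_add_mul_derivative_logPartialSum (N : ℕ) (v : R⟦X⟧) :
    (1 + v) * d⁄dX R (logPartialSum N v) = (1 - (-v) ^ N) * d⁄dX R v := by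
  rw [derivative_logPartialSum, ← mul_assoc, ← mul_neg_geom_sum, sub_neg_eq_add]

end LogPartialSum

theorem coeff_logOne_eq_coeff_logPartialSum {v : Rtu⟦X⟧} (hv : constantCoeff v = 0)
    {k N : ℕ} (h : k ≤ N) : coeff k (logOne v) = coeff k (logPartialSum N v) := by
  simp only [logOne, logPartialSum, coeff_mk, map_sum, map_rat_smul, MvPolynomial.smul_eq_C_mul]
  refine sum_subset (range_subset_range.2 (by omega)) fun m _ hmk => ?_
  rw [coeff_pow_eq_zero_of_lt hv (by simpa using hmk), mul_zero]

theorem one_add_mul_derivative_logOne {v : Rtu⟦X⟧} (hv : constantCoeff v = 0) :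
    (1 + v) * d⁄dX Rtu (logOne v) = d⁄dX Rtu v := by
  ext1 n
  -- the `n`-th coefficient only sees the coefficients of `logOne v` up to `n + 1`
  have hlow : ∀ p ∈ antidiagonal n, coeff p.1 (1 + v) * coeff p.2 (d⁄dX Rtu (logOne v)) =
      coeff p.1 (1 + v) * coeff p.2 (d⁄dX Rtu (logPartialSum (n + 1) v)) := by
    intro p hp
    rw [coeff_derivative, coeff_derivative, coeff_logOne_eq_coeff_logPartialSum (N := n + 1) hv
      (by have := mem_antidiagonal.1 hp; omega)]
  have htail : coeff n ((-v) ^ (n + 1) * d⁄dX Rtu v) = 0 :=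
    X_pow_dvd_iff.1 (dvd_mul_of_dvd_left (pow_dvd_pow_of_dvd (X_dvd_iff.2 (by simp [hv])) _) _) n
      (Nat.lt_succ_self n)
  rw [coeff_mul, sum_congr rfl hlow, ← coeff_mul, one_add_mul_derivative_logPartialSum, sub_mul,
    one_mul, map_sub, htail, sub_zero]

/-- `((t + √-u)ⁿ + (t - √-u)ⁿ) / 2`, half the Lucas sequence `Vₙ(2t, t² + u)`. -/
def halfLucas (n : ℕ) : Rtu :=
  ((algebraMap Rtu (QuadraticAlgebra Rtu (-u) 0) t + ω) ^ n).re

theorem halfLucas_zero : halfLucas 0 = 1 := rfl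

theorem halfLucas_one : halfLucas 1 = t := by
  simp [halfLucas]

theorem halfLucas_add_two (n : ℕ) :
    halfLucas (n + 2) = 2 * t * halfLucas (n + 1) - (t ^ 2 + u) * halfLucas n := by
  rw [halfLucas, re_algebraMap_add_omega_pow_add_two, sub_neg_eq_add]
  rfl

theorem halfLucas_eq_sum (n : ℕ) :
    halfLucas n = ∑ q ∈ range (n / 2 + 1),
      (-1 : Rtu) ^ q * (n.choose (2 * q) : Rtu) * t ^ (n - 2 * q) * u ^ q := by
  rw [halfLucas, re_algebraMap_add_omega_pow]
  exact sum_congr rfl fun q _ => by ring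

abbrev negHalf : Rtu := MvPolynomial.C (-2⁻¹ : ℚ)

theorem two_mul_negHalf : 2 * negHalf = -1 := by
  rw [show (2 : Rtu) = MvPolynomial.C 2 from rfl, ← map_mul]
  norm_num

theorem sPoly_eq_negHalf_sq_mul : sPoly = negHalf ^ 2 * (t ^ 2 + u) := by
  rw [sPoly, ← map_pow]
  norm_num
  ring

theorem one_add_mul_mk_halfLucas :
    (1 + C t * X + C sPoly * X ^ 2) * PowerSeries.mk (fun n => negHalf ^ n * halfLucas (n + 1))
      = C t + C (2 * sPoly) * X := by
  refine one_add_C_mul_X_add_C_mul_X_sq_mul_eq _ _ ?_ ?_ fun n => ?_ <;> simp only [coeff_mk]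
  · rw [pow_zero, one_mul, halfLucas_one]
  · rw [halfLucas_add_two, halfLucas_one, halfLucas_zero, pow_one, pow_zero, one_mul,
      sPoly_eq_negHalf_sq_mul]
    linear_combination (t ^ 2 - negHalf * (t ^ 2 + u)) * two_mul_negHalf
  · rw [halfLucas_add_two, sPoly_eq_negHalf_sq_mul]
    linear_combination (negHalf ^ (n + 1) * t * halfLucas (n + 2)) * two_mul_negHalf

theorem derivative_logOne_eq_mk_halfLucas :
    d⁄dX Rtu (logOne (C t * X + C sPoly * X ^ 2))
      = PowerSeries.mk fun n => negHalf ^ n * halfLucas (n + 1) := by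
  have hv : constantCoeff (C t * X + C sPoly * X ^ 2) = 0 := by simp
  have hne : (1 + (C t * X + C sPoly * X ^ 2) : Rtu⟦X⟧) ≠ 0 := fun h => by
    simpa [hv] using congrArg constantCoeff h
  refine mul_left_cancel₀ hne ?_
  rw [one_add_mul_derivative_logOne hv, derivative_C_mul_X_add_C_mul_X_sq, ← add_assoc,
    one_add_mul_mk_halfLucas]

/-- The Fu polynomials in the variables `t, u`: with
`log(1 + t·x + ((u+t²)/4)·x²) = ∑_{k≥1} f_k x^k`, for `k ≥ 1` one has
`f_k = (1/(k·(-2)^{k-1})) ∑_{q=0}^{⌊k/2⌋} (-1)^q C(k,2q) t^{k-2q} u^q`. -/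
theorem fk_tu_explicit (k : ℕ) (hk : 1 ≤ k) :
    PowerSeries.coeff (R := Rtu) k
        (logOne (PowerSeries.C (R := Rtu) t * PowerSeries.X
          + PowerSeries.C (R := Rtu) sPoly * PowerSeries.X ^ 2))
      = MvPolynomial.C (1 / ((k : ℚ) * (-2 : ℚ) ^ (k - 1))) *
          ∑ q ∈ Finset.range (k / 2 + 1),
            (-1 : Rtu) ^ q * (k.choose (2 * q) : Rtu) * t ^ (k - 2 * q) * u ^ q := by
  obtain ⟨n, rfl⟩ : ∃ n, k = n + 1 := ⟨k - 1, by omega⟩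
  have hcoeff := congrArg (coeff n) derivative_logOne_eq_mk_halfLucas
  rw [coeff_derivative, coeff_mk] at hcoeff
  have hinv : MvPolynomial.C (1 / (n + 1 : ℚ)) * (n + 1 : Rtu) = 1 := by
    rw [← map_natCast MvPolynomial.C, ← map_one MvPolynomial.C, ← map_add, ← map_mul]
    field_simp
  have hconst : MvPolynomial.C (1 / (((n + 1 : ℕ) : ℚ) * (-2 : ℚ) ^ n))
      = MvPolynomial.C (1 / (n + 1 : ℚ)) * negHalf ^ n := by
    rw [← map_pow, ← map_mul]
    congr 1
    field_simp
    push_cast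
    rw [mul_assoc, ← mul_pow]
    norm_num
  rw [← halfLucas_eq_sum, Nat.add_sub_cancel, hconst, mul_assoc, ← hcoeff, ← mul_assoc,
    mul_comm _ (coeff _ _), mul_assoc, hinv, mul_one]
end
end

section
/- Define p_k ∈ ℚ[t,u] by the formal power series expansion 1/(1 + t·x + ((u+t²)/4)·x²) = ∑_{k≥0} p_k(t,u)·x^k. Then p_k = ((-1)^k / 2^k) · ∑_{q=0}^{⌊k/2⌋} (-1)^q · C(k+1, 2q+1) · t^{k-2q} · u^q. -/
noncomputable section

/-- `1 + t·x + ((u+t²)/4)·x²` in `ℚ[t,u][[x]]`. -/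
def Qtu : PowerSeries Rtu :=
  1 + PowerSeries.C t * PowerSeries.X + PowerSeries.C sPoly * PowerSeries.X ^ 2

/-! The coefficients of the inverse of `1 + a x + d x²` are determined by `p₀ = 1`, `p₁ = -a` and
`p (n + 2) = -(a p (n + 1) + d p n)`. Let `O n` be the coefficient of `√b` in `(a + √b) ^ n`;
multiplying by `a + √b` shows `O (n + 2) = 2 a O (n + 1) + (b - a²) O n`, so for `d = (a² - b) / 4`
the recurrence is solved by `p k = (-1/2) ^ k O (k + 1)`. The theorem is the case `a = t`, `b = -u`,
where `O (k + 1)` is the binomial sum of the statement. -/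

open Finset

section

variable {R : Type*} [CommRing R]

/- With `s = √b`, `(a + s) ^ n = binomEvenPart a b n + s * binomOddPart a b n`. -/
def binomEvenPart (a b : R) (n : ℕ) : R :=
  ∑ q ∈ range (n + 1), (n.choose (2 * q) : R) * a ^ (n - 2 * q) * b ^ q

def binomOddPart (a b : R) (n : ℕ) : R :=
  ∑ q ∈ range (n + 1), (n.choose (2 * q + 1) : R) * a ^ (n - (2 * q + 1)) * b ^ q

lemma choose_succ_mul_pow_sub (a : R) (n j : ℕ) :
    (n.choose (j + 1) : R) * a ^ (n - j) = a * ((n.choose (j + 1) : R) * a ^ (n - (j + 1))) := by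
  rcases lt_or_ge j n with h | h
  · rw [show n - j = n - (j + 1) + 1 by omega, pow_succ]
    ring
  · rw [Nat.choose_eq_zero_of_lt (by omega)]
    simp

variable (a b : R)

lemma binomEvenPart_eq_sum_range_add_two (n : ℕ) :
    binomEvenPart a b n
      = ∑ q ∈ range (n + 2), (n.choose (2 * q) : R) * a ^ (n - 2 * q) * b ^ q := by
  rw [sum_range_succ, Nat.choose_eq_zero_of_lt (by omega), binomEvenPart]
  simp

lemma binomOddPart_eq_sum_range_add_two (n : ℕ) :
    binomOddPart a b n
      = ∑ q ∈ range (n + 2), (n.choose (2 * q + 1) : R) * a ^ (n - (2 * q + 1)) * b ^ q := by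
  rw [sum_range_succ, Nat.choose_eq_zero_of_lt (by omega), binomOddPart]
  simp

lemma binomOddPart_succ (n : ℕ) :
    binomOddPart a b (n + 1) = binomEvenPart a b n + a * binomOddPart a b n := by
  rw [binomEvenPart_eq_sum_range_add_two a b n, binomOddPart_eq_sum_range_add_two a b n,
    binomOddPart, mul_sum, ← sum_add_distrib]
  refine sum_congr rfl fun q _ => ?_
  rw [Nat.choose_succ_succ', Nat.add_sub_add_right, Nat.cast_add, add_mul, add_mul,
    choose_succ_mul_pow_sub]
  ring

lemma binomEvenPart_succ (n : ℕ) :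
    binomEvenPart a b (n + 1) = a * binomEvenPart a b n + b * binomOddPart a b n := by
  rw [binomEvenPart_eq_sum_range_add_two a b n, binomEvenPart, binomOddPart,
    sum_range_succ' _ (n + 1), sum_range_succ' _ (n + 1), mul_add, mul_sum, mul_sum,
    add_right_comm, ← sum_add_distrib]
  congr 1
  · refine sum_congr rfl fun q _ => ?_
    rw [show 2 * (q + 1) = 2 * q + 1 + 1 by ring, Nat.choose_succ_succ', Nat.add_sub_add_right,
      Nat.cast_add, add_mul, add_mul, choose_succ_mul_pow_sub]
    ring
  · simp [pow_succ, mul_comm]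

lemma binomOddPart_one : binomOddPart a b 1 = 1 := by
  simp [binomOddPart, sum_range_succ, Nat.choose_eq_zero_of_lt]

lemma binomOddPart_two : binomOddPart a b 2 = 2 * a := by
  simp [binomOddPart, sum_range_succ, Nat.choose_eq_zero_of_lt]

theorem binomOddPart_add_two (n : ℕ) :
    binomOddPart a b (n + 2)
      = 2 * a * binomOddPart a b (n + 1) + (b - a ^ 2) * binomOddPart a b n := by
  have h1 := binomOddPart_succ a b n
  have h2 := binomOddPart_succ a b (n + 1)
  have h3 := binomEvenPart_succ a b n
  linear_combination h2 + h3 - a * h1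

lemma binomOddPart_neg_succ (k : ℕ) :
    binomOddPart a (-b) (k + 1)
      = ∑ q ∈ range (k / 2 + 1),
          (-1) ^ q * ((k + 1).choose (2 * q + 1) : R) * a ^ (k - 2 * q) * b ^ q := by
  symm
  rw [binomOddPart]
  refine sum_subset_zero_on_sdiff (range_subset_range.2 (by omega)) (fun q hq => ?_) (fun q _ => ?_)
  · rw [mem_sdiff, mem_range, mem_range] at hq
    rw [Nat.choose_eq_zero_of_lt (by omega)]
    simp
  · rw [Nat.add_sub_add_right, neg_pow]
    ring

namespace PowerSeries

lemma coeff_eq_of_quadratic_mul_eq_one {c d : R} {P : R⟦X⟧}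
    (hP : (1 + C c * X + C d * X ^ 2) * P = 1) {f : ℕ → R} (h0 : f 0 = 1) (h1 : f 1 = -c)
    (hf : ∀ n, f (n + 2) = -(c * f (n + 1) + d * f n)) (n : ℕ) : coeff n P = f n := by
  have expand : ∀ m, coeff m ((1 + C c * X + C d * X ^ 2) * P)
      = coeff m P + c * (if 1 ≤ m then coeff (m - 1) P else 0)
        + d * (if 2 ≤ m then coeff (m - 2) P else 0) := by
    intro m
    rw [add_mul, add_mul, one_mul, map_add, map_add, mul_assoc, mul_assoc, coeff_C_mul, coeff_C_mul,
      coeff_X_pow_mul', ← pow_one X, coeff_X_pow_mul']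
  have coeff_zero : coeff 0 P = 1 := by simpa [hP] using (expand 0).symm
  induction n using Nat.twoStepInduction with
  | zero => rw [coeff_zero, h0]
  | one =>
    have h := expand 1
    simp only [hP, coeff_one, one_ne_zero, ↓reduceIte, le_refl, tsub_self, coeff_zero, mul_one,
      Nat.not_ofNat_le_one, mul_zero, add_zero] at h
    rw [h1]
    linear_combination -h
  | more n ih₀ ih₁ =>
    have h := expand (n + 2)
    simp only [hP, coeff_one, Nat.add_eq_zero_iff, OfNat.ofNat_ne_zero, and_false, ↓reduceIte,
      le_add_iff_nonneg_left, zero_le, Nat.add_one_sub_one, add_tsub_cancel_right] at h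
    rw [hf, ← ih₀, ← ih₁]
    linear_combination -h

theorem coeff_eq_binomOddPart_of_mul_eq_one [Algebra ℚ R] {P : R⟦X⟧}
    (hP : (1 + C a * X + C (algebraMap ℚ R 4⁻¹ * (a ^ 2 - b)) * X ^ 2) * P = 1) (k : ℕ) :
    coeff k P = algebraMap ℚ R (-2⁻¹) ^ k * binomOddPart a b (k + 1) := by
  have two_mul_half : 2 * algebraMap ℚ R (-2⁻¹) = -1 := by
    rw [← map_ofNat (algebraMap ℚ R), ← map_mul]
    norm_num
  have half_sq : algebraMap ℚ R (-2⁻¹) ^ 2 = algebraMap ℚ R 4⁻¹ := by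
    rw [← map_pow]
    norm_num
  refine coeff_eq_of_quadratic_mul_eq_one
    (f := fun k => algebraMap ℚ R (-2⁻¹) ^ k * binomOddPart a b (k + 1)) hP ?_ ?_ (fun n => ?_) k
  · simp [binomOddPart_one]
  · rw [pow_one, binomOddPart_two]
    linear_combination a * two_mul_half
  · rw [binomOddPart_add_two]
    linear_combination
      a * algebraMap ℚ R (-2⁻¹) ^ (n + 1) * binomOddPart a b (n + 2) * two_mul_half
      + algebraMap ℚ R (-2⁻¹) ^ n * (b - a ^ 2) * binomOddPart a b (n + 1) * half_sq

end PowerSeries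

end

/-- If `P = 1/(1 + t·x + ((u+t²)/4)·x²)` with coefficients `p_k`, then
`p_k = ((-1)^k/2^k) ∑_{q=0}^{⌊k/2⌋} (-1)^q C(k+1,2q+1) t^{k-2q} u^q`. -/
theorem pk_tu_explicit (P : PowerSeries Rtu) (hP : Qtu * P = 1) (k : ℕ) :
    PowerSeries.coeff k P
      = MvPolynomial.C ((-1 : ℚ) ^ k / 2 ^ k) *
          ∑ q ∈ Finset.range (k / 2 + 1),
            (-1 : Rtu) ^ q * ((k + 1).choose (2 * q + 1) : Rtu)
              * t ^ (k - 2 * q) * u ^ q := by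
  have hQ : Qtu = 1 + PowerSeries.C t * PowerSeries.X
      + PowerSeries.C (algebraMap ℚ Rtu 4⁻¹ * (t ^ 2 - -u)) * PowerSeries.X ^ 2 := by
    rw [Qtu, sPoly, MvPolynomial.algebraMap_eq, sub_neg_eq_add, add_comm (t ^ 2)]
  rw [hQ] at hP
  rw [PowerSeries.coeff_eq_binomOddPart_of_mul_eq_one t (-u) hP, binomOddPart_neg_succ,
    MvPolynomial.algebraMap_eq, ← map_pow, neg_pow, div_eq_mul_inv, inv_pow]
end
end

section
/- Define q_k ∈ ℚ[t,u] by the formal power series expansion -1/(1 + t·x + ((u+t²)/4)·x²)² = ∑_{k≥0} q_k(t,u)·x^k. Then q_k = ((-1)^{k+1} / 2^k) · ∑_{q=0}^{⌊k/2⌋} (-1)^q · (q+1) · C(k+3, 2q+3) · t^{k-2q} · u^q. -/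
noncomputable section

/-!
Write `Qtu = A² + B` with `A = 1 + (t/2)·x` and `B = (u/4)·x²`. With `E = A⁻¹` and
`w = B·E²` we get `Qtu⁻² = E⁴·(1 + w)⁻² = ∑_q (-1)^q (q+1) (u/4)^q x^{2q} E^{2q+4}`, and by
the negative binomial series the `x^k` coefficient of `x^{2q} E^{2q+4}` is
`C(k+3, 2q+3) (-t/2)^{k-2q}`. Since `w` has order `2` in `x`, the terms with `q ≤ k/2` already
determine the `x^k` coefficient, so only a finite truncation of `(1 + w)⁻²` is needed.
-/

open PowerSeries Finset

theorem one_add_sq_mul_sum_range_neg_one_pow_mul_pow {R : Type*} [CommRing R] (w : R) (n : ℕ) :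
    (1 + w) ^ 2 * ∑ q ∈ range n, (-1) ^ q * ((q + 1 : ℕ) : R) * w ^ q
      = 1 - (-1) ^ n * w ^ n * ((n + 1 : ℕ) + n * w) := by
  induction n with
  | zero => simp
  | succ n ih =>
    rw [sum_range_succ, mul_add, ih]
    push_cast
    ring

theorem coeff_rescale_mk_one_pow {R : Type*} [CommRing R] (c : R) (d n : ℕ) :
    coeff n (rescale c (mk 1) ^ (d + 1)) = c ^ n * (d + n).choose d := by
  rw [← map_pow, mk_one_pow_eq_mk_choose_add, coeff_rescale, coeff_mk]

theorem one_sub_C_mul_X_mul_rescale_mk_one {R : Type*} [CommRing R] (c : R) :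
    (1 - C c * X) * rescale c (mk 1) = 1 := by
  rw [← rescale_X, ← map_one (rescale c), ← map_sub, ← map_mul, mul_comm,
    mk_one_mul_one_sub_eq_one, map_one]

theorem coeff_eq_of_mul_eq_one_of_mul_eq_one_sub_X_pow_mul {S : Type*} [CommRing S]
    {P M F G : S⟦X⟧} {m k : ℕ} (hM : P * M = 1) (hF : P * F = 1 - X ^ m * G) (hk : k < m) :
    coeff k M = coeff k F := by
  have hMF : M = F + X ^ m * (G * M) := by
    linear_combination F * hM - M * hF
  rw [hMF, map_add, coeff_X_pow_mul', if_neg (by omega), add_zero]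

theorem coeff_eq_sum_of_sq_mul_eq_one {R : Type*} [CommRing R] (c b : R) {M : R⟦X⟧}
    (hM : ((1 - C c * X) ^ 2 + C b * X ^ 2) ^ 2 * M = 1) (k : ℕ) :
    coeff k M = ∑ q ∈ range (k / 2 + 1),
      (-1) ^ q * ((q + 1 : ℕ) : R) * ((k + 3).choose (2 * q + 3) : R)
        * c ^ (k - 2 * q) * b ^ q := by
  set E : R⟦X⟧ := rescale c (mk 1)
  set w : R⟦X⟧ := C b * X ^ 2 * E ^ 2
  set n := k / 2 + 1
  have hQ : ((1 - C c * X) ^ 2 + C b * X ^ 2) * E ^ 2 = 1 + w := by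
    linear_combination (1 + (1 - C c * X) * E) * one_sub_C_mul_X_mul_rescale_mk_one c
  have hF : ((1 - C c * X) ^ 2 + C b * X ^ 2) ^ 2 *
      (E ^ 4 * ∑ q ∈ range n, (-1) ^ q * ((q + 1 : ℕ) : R⟦X⟧) * w ^ q)
      = 1 - X ^ (2 * n) *
          ((-1) ^ n * C b ^ n * E ^ (2 * n) * (((n + 1 : ℕ) : R⟦X⟧) + (n : R⟦X⟧) * w)) := by
    calc _ = (((1 - C c * X) ^ 2 + C b * X ^ 2) * E ^ 2) ^ 2 *
          ∑ q ∈ range n, (-1) ^ q * ((q + 1 : ℕ) : R⟦X⟧) * w ^ q := by ring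
      _ = 1 - (-1) ^ n * w ^ n * ((n + 1 : ℕ) + n * w) := by
        rw [hQ, one_add_sq_mul_sum_range_neg_one_pow_mul_pow]
      _ = _ := by simp only [w]; ring
  rw [coeff_eq_of_mul_eq_one_of_mul_eq_one_sub_X_pow_mul hM hF (by omega), mul_sum, map_sum]
  refine sum_congr rfl fun q hq => ?_
  have hqk : 2 * q ≤ k := by rw [mem_range] at hq; omega
  have hterm : E ^ 4 * ((-1) ^ q * ((q + 1 : ℕ) : R⟦X⟧) * w ^ q)
      = C ((-1) ^ q * ((q + 1 : ℕ) : R) * b ^ q) * (X ^ (2 * q) * E ^ (2 * q + 3 + 1)) := by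
    simp only [w, map_mul, map_pow, map_neg, map_one, map_natCast]
    ring
  rw [hterm, coeff_C_mul, coeff_X_pow_mul', if_pos hqk, coeff_rescale_mk_one_pow,
    show 2 * q + 3 + (k - 2 * q) = k + 3 by omega]
  ring

theorem Qtu_eq_sq_add : Qtu = (1 - C (MvPolynomial.C (-1 / 2 : ℚ) * t) * X) ^ 2
    + C (MvPolynomial.C (1 / 4 : ℚ) * u) * X ^ 2 := by
  have half : C (MvPolynomial.C (1 / 2 : ℚ) : Rtu) * 2 = 1 := by
    rw [← map_ofNat (C.comp MvPolynomial.C) 2, RingHom.comp_apply, ← map_mul, ← map_mul]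
    norm_num
  rw [Qtu, sPoly, show (-1 / 2 : ℚ) = -(1 / 2) by norm_num,
    show (1 / 4 : ℚ) = (1 / 2) ^ 2 by norm_num, show (4 : ℚ)⁻¹ = (1 / 2) ^ 2 by norm_num]
  simp only [map_mul, map_add, map_pow, map_neg]
  linear_combination -(C t * X) * half

/-- If `N = -1/(1 + t·x + ((u+t²)/4)·x²)²`, i.e. `Qtu² · N = -1`, with coefficients
`q_k`, then `q_k = ((-1)^{k+1}/2^k) ∑_{q=0}^{⌊k/2⌋} (-1)^q (q+1) C(k+3,2q+3) t^{k-2q} u^q`. -/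
theorem qk_tu_explicit (N : PowerSeries Rtu) (hN : Qtu ^ 2 * N = -1) (k : ℕ) :
    PowerSeries.coeff k N
      = MvPolynomial.C ((-1 : ℚ) ^ (k + 1) / 2 ^ k) *
          ∑ q ∈ Finset.range (k / 2 + 1),
            (-1 : Rtu) ^ q * ((q + 1 : ℕ) : Rtu) * ((k + 3).choose (2 * q + 3) : Rtu)
              * t ^ (k - 2 * q) * u ^ q := by
  have hM : Qtu ^ 2 * -N = 1 := by rw [mul_neg, hN, neg_neg]
  rw [Qtu_eq_sq_add] at hM
  rw [← neg_neg N, map_neg, coeff_eq_sum_of_sq_mul_eq_one _ _ hM, mul_sum, ← sum_neg_distrib]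
  refine sum_congr rfl fun q hq => ?_
  have hqk : 2 * q ≤ k := by rw [mem_range] at hq; omega
  have hC : -((-1 / 2 : ℚ) ^ (k - 2 * q) * (1 / 4) ^ q) = (-1) ^ (k + 1) / 2 ^ k := by
    rw [show (1 / 4 : ℚ) = (-1 / 2) ^ 2 by norm_num, ← pow_mul, ← pow_add,
      Nat.sub_add_cancel hqk, div_pow]
    ring
  simp only [mul_pow, ← map_pow, ← hC, map_neg, map_mul]
  ring
end
end
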